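/- Let k ≥ 1, and let (m_l)_{l=1}^k be real numbers defined by m_l = sup of Ẽ_l over (0,∞)^l × (M^l \ Δ_l), where Ẽ_l(t,ξ) = c₂ Σ t_i² h(ξ_i) - c₃ Σ t_i^(n-2) A_{ξ_i} - c₃ Σ_{i≠j} (t_i t_j)^((n-2)/2) G(ξ_i,ξ_j), with c₂, c₃ > 0, n ≥ 7, (M,g) a compact Riemannian manifold, A : M → (0,∞) continuous with positive minimum, h continuous with max_M h > 0, and G : M×M \ diag → (0,∞) continuous with G(x,y) → +∞ as d(x,y) → 0. Then 0 < m₁ < m₂ < … < m_k < +∞. -/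

import Mathlib

/-!
Each single-bubble term `c₂ H t² - c₃ a t^(n-2)` tends to `-∞`, so the levels are bounded above
and a near-maximising configuration of `l` bubbles has weights bounded by some `T`. Fix in advance
`l + 1` points with `h > 0`, pairwise at distance `≥ δ`; by pigeonhole one of them is at distance
`≥ δ/2` from the `l` given centres, so its interactions with them are bounded. A new bubble of
small weight `s` there changes the energy by at least
`c₂ h s² - c₃ A s^(n-2) - C T^((n-2)/2) s^((n-2)/2)`, which is positive for small `s` because
`(n-2)/2 > 2`, uniformly in the configuration. Hence `m_l < m_{l+1}`; and `m₀ = 0` (the empty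
configuration), so `0 < m₁` is the case `l = 0`.
-/

open Finset Filter Topology Set

theorem tendsto_mul_sq_sub_mul_rpow_atBot {α β p : ℝ} (hβ : 0 < β) (hp : 2 < p) :
    Tendsto (fun t : ℝ => α * t ^ 2 - β * t ^ p) atTop atBot := by
  have hfactor : ∀ᶠ t : ℝ in atTop, t ^ 2 * (α - β * t ^ (p - 2)) = α * t ^ 2 - β * t ^ p := by
    filter_upwards [eventually_gt_atTop 0] with t ht
    rw [mul_sub, ← Real.rpow_natCast, mul_left_comm, ← Real.rpow_add ht]
    norm_num [mul_comm]
  refine Tendsto.congr' hfactor ((tendsto_pow_atTop two_ne_zero).atTop_mul_atBot₀ ?_)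
  exact tendsto_atBot_add_const_left _ α
    (tendsto_neg_atTop_atBot.comp ((tendsto_rpow_atTop (by linarith)).const_mul_atTop hβ))

theorem exists_mul_sq_sub_mul_rpow_le {α β p : ℝ} (hβ : 0 < β) (hp : 2 < p) :
    ∃ B, ∀ t, 0 < t → α * t ^ 2 - β * t ^ p ≤ B := by
  obtain ⟨T, hT⟩ :=
    eventually_atTop.1 ((tendsto_mul_sq_sub_mul_rpow_atBot hβ hp).eventually_le_atBot 0)
  refine ⟨|α| * T ^ 2, fun t ht => ?_⟩
  rcases le_total T t with hTt | htT
  · exact (hT t hTt).trans (by positivity)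
  · have : α * t ^ 2 ≤ |α| * T ^ 2 :=
      mul_le_mul (le_abs_self α) (pow_le_pow_left₀ ht.le htT 2) (sq_nonneg t) (abs_nonneg α)
    have := Real.rpow_pos_of_pos ht p
    nlinarith

theorem eventually_mul_sq_sub_mul_rpow_sub_mul_rpow_pos {α β K p : ℝ} (hα : 0 < α) (hp : 4 < p) :
    ∀ᶠ s in 𝓝[>] (0 : ℝ), 0 < α * s ^ 2 - β * s ^ p - K * s ^ (p / 2) := by
  set g : ℝ → ℝ := fun s => α - β * s ^ (p - 2) - K * s ^ (p / 2 - 2)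
  have hg : ContinuousAt g 0 := by
    apply_rules [ContinuousAt.sub, ContinuousAt.mul, continuousAt_const,
      Real.continuousAt_rpow_const] <;> right <;> linarith
  have hg0 : g 0 = α := by
    simp only [g, Real.zero_rpow (by linarith : p - 2 ≠ 0),
      Real.zero_rpow (by linarith : p / 2 - 2 ≠ 0)]
    ring
  filter_upwards [nhdsWithin_le_nhds (hg.eventually (eventually_gt_nhds (hg0 ▸ hα))),
    self_mem_nhdsWithin] with s hgs (hs : 0 < s)
  have hpow : ∀ q : ℝ, s ^ 2 * s ^ (q - 2) = s ^ q := fun q => by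
    rw [← Real.rpow_natCast, ← Real.rpow_add hs]; norm_num
  have : α * s ^ 2 - β * s ^ p - K * s ^ (p / 2) = s ^ 2 * g s := by
    simp only [g, mul_sub, mul_left_comm (s ^ 2), hpow]; ring
  rw [this]; positivity

theorem exists_pos_forall_le_dist_of_injective {M ι : Type*} [MetricSpace M] [Finite ι]
    {q : ι → M} (hq : Function.Injective q) :
    ∃ δ > 0, ∀ j j', j ≠ j' → δ ≤ dist (q j) (q j') := by
  have : ∀ᶠ δ in 𝓝 (0 : ℝ), ∀ j j', j ≠ j' → δ ≤ dist (q j) (q j') := by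
    simp only [eventually_all]
    exact fun j j' hjj => eventually_le_nhds (dist_pos.2 (hq.ne hjj))
  obtain ⟨δ, hδ, hδ0⟩ :=
    ((this.filter_mono nhdsWithin_le_nhds).and (self_mem_nhdsWithin (s := Ioi 0))).exists
  exact ⟨δ, hδ0, hδ⟩

theorem exists_forall_half_le_dist {M ι κ : Type*} [PseudoMetricSpace M] [Fintype ι] [Fintype κ]
    (hcard : Fintype.card κ < Fintype.card ι) {q : ι → M} {δ : ℝ}
    (hq : ∀ j j', j ≠ j' → δ ≤ dist (q j) (q j')) (ξ : κ → M) :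
    ∃ j, ∀ i, δ / 2 ≤ dist (ξ i) (q j) := by
  by_contra! hnear
  choose φ hφ using hnear
  obtain ⟨j, j', hjj, hφj⟩ := Fintype.exists_ne_map_eq_of_card_lt φ hcard
  linarith [hq j j' hjj, dist_triangle_left (q j) (q j') (ξ (φ j)), hφ j, hφj ▸ hφ j']

theorem exists_forall_le_of_le_dist {M : Type*} [PseudoMetricSpace M] [CompactSpace M]
    {G : M → M → ℝ} (hG : ContinuousOn (fun x : M × M => G x.1 x.2) {x | x.1 ≠ x.2})
    {ε : ℝ} (hε : 0 < ε) : ∃ Γ, ∀ x y, ε ≤ dist x y → G x y ≤ Γ := by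
  set K : Set (M × M) := {x | ε ≤ dist x.1 x.2}
  have hK : IsCompact K := (isClosed_le continuous_const continuous_dist).isCompact
  have hKsub : K ⊆ {x | x.1 ≠ x.2} := fun x (hx : ε ≤ dist x.1 x.2) hx' => by
    rw [hx', dist_self] at hx
    linarith
  obtain ⟨Γ, hΓ⟩ := (hK.image_of_continuousOn (hG.mono hKsub)).bddAbove
  exact ⟨Γ, fun x y hxy => hΓ ⟨(x, y), hxy, rfl⟩⟩

section
variable {M : Type*} (c₂ c₃ p : ℝ) (A h : M → ℝ) (G : M → M → ℝ)

noncomputable def bubbleEnergy {l : ℕ} (t : Fin l → ℝ) (ξ : Fin l → M) : ℝ :=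
  c₂ * ∑ i, t i ^ 2 * h (ξ i) - c₃ * ∑ i, t i ^ p * A (ξ i)
    - c₃ * ∑ i, ∑ j, (if i ≠ j then (t i * t j) ^ (p / 2) * G (ξ i) (ξ j) else 0)

def bubbleLevels (l : ℕ) : Set ℝ :=
  {v | ∃ (t : Fin l → ℝ) (ξ : Fin l → M), (∀ i, 0 < t i) ∧ Function.Injective ξ ∧
    v = bubbleEnergy c₂ c₃ p A h G t ξ}

theorem bubbleEnergy_cons {l : ℕ} (s : ℝ) (t : Fin l → ℝ) (x : M) (ξ : Fin l → M) :
    bubbleEnergy c₂ c₃ p A h G (Fin.cons s t) (Fin.cons x ξ) =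
      bubbleEnergy c₂ c₃ p A h G t ξ + (c₂ * s ^ 2 * h x - c₃ * s ^ p * A x)
        - c₃ * ∑ i, ((s * t i) ^ (p / 2) * G x (ξ i) + (t i * s) ^ (p / 2) * G (ξ i) x) := by
  simp only [bubbleEnergy, Fin.sum_univ_succ, Fin.cons_zero, Fin.cons_succ, ne_eq,
    not_true_eq_false, if_false, Fin.succ_ne_zero, (Fin.succ_ne_zero _).symm, not_false_eq_true,
    if_true, Fin.succ_inj, sum_add_distrib]
  ring

theorem bubbleLevels_zero : bubbleLevels c₂ c₃ p A h G 0 = {0} := by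
  ext v
  simp [bubbleLevels, bubbleEnergy, Function.injective_of_subsingleton]

theorem bubbleLevels_nonempty [Infinite M] (l : ℕ) : (bubbleLevels c₂ c₃ p A h G l).Nonempty :=
  ⟨_, fun _ => 1, Fin.valEmbedding.trans (Infinite.natEmbedding M), fun _ => one_pos,
    Function.Embedding.injective _, rfl⟩

theorem bubbleEnergy_le_sum {H a : ℝ} (hc₂ : 0 ≤ c₂) (hc₃ : 0 ≤ c₃) (hh : ∀ x, h x ≤ H)
    (hA : ∀ x, a ≤ A x) (hG : ∀ x y, x ≠ y → 0 ≤ G x y) {l : ℕ} {t : Fin l → ℝ}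
    {ξ : Fin l → M} (ht : ∀ i, 0 < t i) (hξ : Function.Injective ξ) :
    bubbleEnergy c₂ c₃ p A h G t ξ ≤ ∑ i, (c₂ * H * t i ^ 2 - c₃ * a * t i ^ p) := by
  have hgain : ∑ i, t i ^ 2 * h (ξ i) ≤ ∑ i, H * t i ^ 2 :=
    sum_le_sum fun i _ => by nlinarith [hh (ξ i), sq_nonneg (t i)]
  have hself : ∑ i, a * t i ^ p ≤ ∑ i, t i ^ p * A (ξ i) :=
    sum_le_sum fun i _ => by nlinarith [hA (ξ i), Real.rpow_pos_of_pos (ht i) p]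
  have hcross : 0 ≤ ∑ i, ∑ j, (if i ≠ j then (t i * t j) ^ (p / 2) * G (ξ i) (ξ j) else 0) :=
    sum_nonneg fun i _ => sum_nonneg fun j _ => by
      split_ifs with hij
      · exact mul_nonneg (Real.rpow_nonneg (mul_pos (ht i) (ht j)).le _) (hG _ _ (hξ.ne hij))
      · exact le_rfl
  calc bubbleEnergy c₂ c₃ p A h G t ξ ≤ c₂ * ∑ i, H * t i ^ 2 - c₃ * ∑ i, a * t i ^ p := by
        unfold bubbleEnergy
        linarith [mul_le_mul_of_nonneg_left hgain hc₂, mul_le_mul_of_nonneg_left hself hc₃,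
          mul_nonneg hc₃ hcross]
    _ = ∑ i, (c₂ * H * t i ^ 2 - c₃ * a * t i ^ p) := by
        simp only [sum_sub_distrib, mul_sum, mul_assoc]

theorem bubbleEnergy_cons_ge {l : ℕ} {s T Γ : ℝ} {t : Fin l → ℝ} {x : M} {ξ : Fin l → M}
    (hc₃ : 0 ≤ c₃) (hp : 0 ≤ p) (hs : 0 < s) (ht : ∀ i, 0 < t i) (hT : ∀ i, t i ≤ T)
    (hG : ∀ i, G x (ξ i) ∈ Icc 0 Γ) (hG' : ∀ i, G (ξ i) x ∈ Icc 0 Γ) :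
    bubbleEnergy c₂ c₃ p A h G t ξ
        + (c₂ * h x * s ^ 2 - c₃ * A x * s ^ p - 2 * c₃ * l * Γ * T ^ (p / 2) * s ^ (p / 2))
      ≤ bubbleEnergy c₂ c₃ p A h G (Fin.cons s t) (Fin.cons x ξ) := by
  have hterm : ∀ i, (s * t i) ^ (p / 2) * G x (ξ i) + (t i * s) ^ (p / 2) * G (ξ i) x
      ≤ 2 * Γ * T ^ (p / 2) * s ^ (p / 2) := fun i => by
    have hst : (s * t i) ^ (p / 2) ≤ T ^ (p / 2) * s ^ (p / 2) := by
      rw [← Real.mul_rpow ((ht i).le.trans (hT i)) hs.le, mul_comm T]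
      exact Real.rpow_le_rpow (mul_pos hs (ht i)).le
        (mul_le_mul_of_nonneg_left (hT i) hs.le) (by positivity)
    have hst0 : 0 ≤ (s * t i) ^ (p / 2) := Real.rpow_nonneg (mul_pos hs (ht i)).le _
    have hTs0 : 0 ≤ T ^ (p / 2) * s ^ (p / 2) := hst0.trans hst
    rw [mul_comm (t i) s]
    linarith [mul_le_mul hst (hG i).2 (hG i).1 hTs0, mul_le_mul hst (hG' i).2 (hG' i).1 hTs0]
  have hsum := sum_le_sum fun i (_ : i ∈ Finset.univ) => hterm i
  rw [sum_const, card_univ, Fintype.card_fin, nsmul_eq_mul] at hsum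
  rw [bubbleEnergy_cons]
  linarith [mul_le_mul_of_nonneg_left hsum hc₃]

theorem bddAbove_bubbleLevels {a : ℝ} (hc₂ : 0 ≤ c₂) (hc₃ : 0 < c₃) (hp : 2 < p) (ha : 0 < a)
    (hA : ∀ x, a ≤ A x) (hh : BddAbove (range h)) (hG : ∀ x y, x ≠ y → 0 ≤ G x y) (l : ℕ) :
    BddAbove (bubbleLevels c₂ c₃ p A h G l) := by
  obtain ⟨H, hH⟩ := hh
  obtain ⟨B, hB⟩ := exists_mul_sq_sub_mul_rpow_le (α := c₂ * H) (mul_pos hc₃ ha) hp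
  refine ⟨l * B, ?_⟩
  rintro _ ⟨t, ξ, ht, hξ, rfl⟩
  calc _ ≤ ∑ i, (c₂ * H * t i ^ 2 - c₃ * a * t i ^ p) :=
        bubbleEnergy_le_sum _ _ _ _ _ _ hc₂ hc₃.le (fun x => hH ⟨x, rfl⟩) hA hG ht hξ
    _ ≤ ∑ _i : Fin l, B := sum_le_sum fun i _ => hB _ (ht i)
    _ = l * B := by simp

theorem exists_forall_le_of_le_bubbleEnergy {a : ℝ} (hc₂ : 0 ≤ c₂) (hc₃ : 0 < c₃) (hp : 2 < p)
    (ha : 0 < a) (hA : ∀ x, a ≤ A x) (hh : BddAbove (range h)) (hG : ∀ x y, x ≠ y → 0 ≤ G x y)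
    (l : ℕ) (C : ℝ) :
    ∃ T, ∀ (t : Fin l → ℝ) (ξ : Fin l → M), (∀ i, 0 < t i) → Function.Injective ξ →
      C ≤ bubbleEnergy c₂ c₃ p A h G t ξ → ∀ i, t i ≤ T := by
  obtain ⟨H, hH⟩ := hh
  set φ : ℝ → ℝ := fun t => c₂ * H * t ^ 2 - c₃ * a * t ^ p
  obtain ⟨B, hB⟩ := exists_mul_sq_sub_mul_rpow_le (α := c₂ * H) (mul_pos hc₃ ha) hp
  obtain ⟨T, hT⟩ := eventually_atTop.1 <|
    (tendsto_mul_sq_sub_mul_rpow_atBot (α := c₂ * H) (mul_pos hc₃ ha) hp).eventually_lt_atBot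
      (C - l * B + B)
  refine ⟨T, fun t ξ ht hξ hC i => ?_⟩
  by_contra! hTi
  -- all bubbles other than the `i`-th contribute at most `B` each
  have hothers : B - φ (t i) ≤ ∑ j, (B - φ (t j)) :=
    single_le_sum (fun j _ => sub_nonneg.2 (hB _ (ht j))) (mem_univ i)
  simp only [sum_sub_distrib, sum_const, card_univ, Fintype.card_fin, nsmul_eq_mul] at hothers
  linarith [hT (t i) hTi.le,
    bubbleEnergy_le_sum c₂ c₃ p A h G hc₂ hc₃.le (fun x => hH ⟨x, rfl⟩) hA hG ht hξ]

theorem exists_uniform_gain_bubbleLevels_succ [MetricSpace M] [CompactSpace M] (hc₂ : 0 < c₂)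
    (hc₃ : 0 ≤ c₃) (hp : 4 < p) (hpos : {x | 0 < h x}.Infinite)
    (hGcont : ContinuousOn (fun x : M × M => G x.1 x.2) {x | x.1 ≠ x.2})
    (hGpos : ∀ x y, x ≠ y → 0 < G x y) (l : ℕ) (T : ℝ) :
    ∃ γ > 0, ∀ (t : Fin l → ℝ) (ξ : Fin l → M), (∀ i, 0 < t i) → Function.Injective ξ →
      (∀ i, t i ≤ T) → ∃ v ∈ bubbleLevels c₂ c₃ p A h G (l + 1),
        bubbleEnergy c₂ c₃ p A h G t ξ + γ ≤ v := by
  -- `l + 1` separated candidate centres: by pigeonhole one of them is far from any `l` centres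
  let q : Fin (l + 1) → M := fun j => hpos.natEmbedding _ j
  have hq : Function.Injective q := fun j j' hjj =>
    Fin.val_injective ((hpos.natEmbedding _).injective (Subtype.ext hjj))
  obtain ⟨δ, hδ, hqδ⟩ := exists_pos_forall_le_dist_of_injective hq
  obtain ⟨Γ, hΓ⟩ := exists_forall_le_of_le_dist hGcont (half_pos hδ)
  set K := 2 * c₃ * l * Γ * T ^ (p / 2)
  let gain : ℝ → Fin (l + 1) → ℝ := fun s j =>
    c₂ * h (q j) * s ^ 2 - c₃ * A (q j) * s ^ p - K * s ^ (p / 2)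
  obtain ⟨s, hgain, hs⟩ := ((eventually_all.2 fun j =>
    eventually_mul_sq_sub_mul_rpow_sub_mul_rpow_pos (β := c₃ * A (q j)) (K := K)
      (mul_pos hc₂ (hpos.natEmbedding _ j).2) hp).and self_mem_nhdsWithin).exists
  obtain ⟨j₀, hj₀⟩ := Finite.exists_min (gain s)
  refine ⟨gain s j₀, hgain j₀, fun t ξ ht hξ hT => ?_⟩
  obtain ⟨j, hj⟩ := exists_forall_half_le_dist (by simp) hqδ ξ
  have hξq : q j ∉ range ξ := by
    rintro ⟨i, hi⟩
    linarith [hj i, dist_self (q j) ▸ hi ▸ hj i]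
  have hGfar : ∀ i, G (q j) (ξ i) ∈ Icc 0 Γ ∧ G (ξ i) (q j) ∈ Icc 0 Γ := fun i =>
    have hne : ξ i ≠ q j := fun hi => hξq ⟨i, hi⟩
    ⟨⟨(hGpos _ _ hne.symm).le, hΓ _ _ (dist_comm (ξ i) (q j) ▸ hj i)⟩,
      ⟨(hGpos _ _ hne).le, hΓ _ _ (hj i)⟩⟩
  refine ⟨_, ⟨Fin.cons s t, Fin.cons (q j) ξ, Fin.cases hs ht,
    Fin.cons_injective_of_injective hξq hξ, rfl⟩, ?_⟩
  linarith [hj₀ j, bubbleEnergy_cons_ge c₂ c₃ p A h G hc₃ (by linarith) hs ht hT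
    (fun i => (hGfar i).1) (fun i => (hGfar i).2)]

theorem sSup_bubbleLevels_lt_succ [MetricSpace M] [CompactSpace M] {a : ℝ} (hc₂ : 0 < c₂)
    (hc₃ : 0 < c₃) (hp : 4 < p) (ha : 0 < a) (hA : ∀ x, a ≤ A x) (hh : BddAbove (range h))
    (hpos : {x | 0 < h x}.Infinite)
    (hGcont : ContinuousOn (fun x : M × M => G x.1 x.2) {x | x.1 ≠ x.2})
    (hGpos : ∀ x y, x ≠ y → 0 < G x y) (l : ℕ) :
    sSup (bubbleLevels c₂ c₃ p A h G l) < sSup (bubbleLevels c₂ c₃ p A h G (l + 1)) := by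
  have hG : ∀ x y, x ≠ y → 0 ≤ G x y := fun x y hxy => (hGpos x y hxy).le
  have : Infinite M := infinite_univ_iff.1 (hpos.mono (subset_univ _))
  set m := sSup (bubbleLevels c₂ c₃ p A h G l)
  obtain ⟨T, hT⟩ := exists_forall_le_of_le_bubbleEnergy c₂ c₃ p A h G hc₂.le hc₃ (by linarith)
    ha hA hh hG l (m - 1)
  obtain ⟨γ, hγ, hgain⟩ := exists_uniform_gain_bubbleLevels_succ c₂ c₃ p A h G hc₂ hc₃.le hp
    hpos hGcont hGpos l T
  obtain ⟨_, ⟨t, ξ, ht, hξ, rfl⟩, hlt⟩ := exists_lt_of_lt_csSup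
    (bubbleLevels_nonempty c₂ c₃ p A h G l) (sub_lt_self m (lt_min one_pos hγ))
  obtain ⟨v, hv, hle⟩ := hgain t ξ ht hξ (hT t ξ ht hξ (by linarith [min_le_left 1 γ]))
  linarith [min_le_right 1 γ, le_csSup (bddAbove_bubbleLevels c₂ c₃ p A h G hc₂.le hc₃
    (by linarith) ha hA hh hG (l + 1)) hv]
end

theorem stmt16_general {M : Type*} [MetricSpace M] [CompactSpace M]
    (n k : ℕ) (hn : 7 ≤ n)
    (c₂ c₃ : ℝ) (hc₂ : 0 < c₂) (hc₃ : 0 < c₃)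
    (A h : M → ℝ)
    (hAmin : ∃ a : ℝ, 0 < a ∧ ∀ x, a ≤ A x)
    (hhcont : Continuous h)
    (hhinf : {x | 0 < h x}.Infinite)
    (G : M → M → ℝ)
    (hGcont : ContinuousOn (fun p : M × M => G p.1 p.2) {p | p.1 ≠ p.2})
    (hGpos : ∀ x y, x ≠ y → 0 < G x y)
    (S : ℕ → Set ℝ)
    (hS : ∀ l, S l = {v | ∃ (t : Fin l → ℝ) (ξ : Fin l → M),
      (∀ i, 0 < t i) ∧ Function.Injective ξ ∧
      v = c₂ * ∑ i, (t i) ^ 2 * h (ξ i) - c₃ * ∑ i, (t i) ^ ((n:ℝ) - 2) * A (ξ i)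
          - c₃ * ∑ i, ∑ j,
              (if i ≠ j then (t i * t j) ^ (((n:ℝ) - 2) / 2) * G (ξ i) (ξ j) else 0)}) :
    (∀ l, 1 ≤ l → l ≤ k → (S l).Nonempty ∧ BddAbove (S l)) ∧
    0 < sSup (S 1) ∧
    (∀ l, 1 ≤ l → l < k → sSup (S l) < sSup (S (l + 1))) := by
  obtain ⟨a, ha, hA⟩ := hAmin
  obtain rfl : S = bubbleLevels c₂ c₃ ((n : ℝ) - 2) A h G := funext hS
  have hp : (4 : ℝ) < n - 2 := by
    have : (7 : ℝ) ≤ n := by exact_mod_cast hn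
    linarith
  have hh : BddAbove (range h) := (isCompact_range hhcont).bddAbove
  have : Infinite M := infinite_univ_iff.1 (hhinf.mono (subset_univ _))
  have hlt := sSup_bubbleLevels_lt_succ _ _ _ A h G hc₂ hc₃ hp ha hA hh hhinf hGcont hGpos
  refine ⟨fun l _ _ => ⟨bubbleLevels_nonempty _ _ _ A h G l, ?_⟩, ?_, fun l _ _ => hlt l⟩
  · exact bddAbove_bubbleLevels _ _ _ A h G hc₂.le hc₃ (by linarith) ha hA hh
      (fun x y hxy => (hGpos x y hxy).le) l
  · simpa [bubbleLevels_zero] using hlt 0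

/-- Strict monotonicity of the multi-bubble suprema
`0 < m₁ < m₂ < … < m_k < +∞`, where
`m_l = sup Ẽ_l` over `(0,∞)^l × (M^l \ Δ_l)` with
`Ẽ_l(t,ξ) = c₂ Σ tᵢ² h(ξᵢ) - c₃ Σ tᵢ^(n-2) A_{ξᵢ} - c₃ Σ_{i≠j} (tᵢtⱼ)^((n-2)/2) G(ξᵢ,ξⱼ)`.

Here `M` is a compact (Riemannian) manifold, modelled as a compact metric space; the
hypothesis `max_M h > 0` on a manifold yields that `{h > 0}` is an (open, hence)
infinite set, which we take as hypothesis. Finiteness of each `m_l` is expressed as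
`BddAbove (S l)` (together with nonemptiness, so that `sSup (S l)` is the genuine
supremum `m_l`). -/
theorem stmt16 {M : Type*} [MetricSpace M] [CompactSpace M]
    (n k : ℕ) (hn : 7 ≤ n) (hk : 1 ≤ k)
    (c₂ c₃ : ℝ) (hc₂ : 0 < c₂) (hc₃ : 0 < c₃)
    (A h : M → ℝ) (hAcont : Continuous A) (hApos : ∀ x, 0 < A x)
    (hAmin : ∃ a : ℝ, 0 < a ∧ ∀ x, a ≤ A x)
    (hhcont : Continuous h) (hhpos : ∃ x, 0 < h x)
    (hhinf : {x | 0 < h x}.Infinite)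
    (G : M → M → ℝ)
    (hGcont : ContinuousOn (fun p : M × M => G p.1 p.2) {p | p.1 ≠ p.2})
    (hGpos : ∀ x y, x ≠ y → 0 < G x y)
    (hGblow : ∀ C : ℝ, ∃ δ > 0, ∀ x y, x ≠ y → dist x y < δ → C ≤ G x y)
    (S : ℕ → Set ℝ)
    (hS : ∀ l, S l = {v | ∃ (t : Fin l → ℝ) (ξ : Fin l → M),
      (∀ i, 0 < t i) ∧ Function.Injective ξ ∧
      v = c₂ * ∑ i, (t i) ^ 2 * h (ξ i) - c₃ * ∑ i, (t i) ^ ((n:ℝ) - 2) * A (ξ i)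
          - c₃ * ∑ i, ∑ j,
              (if i ≠ j then (t i * t j) ^ (((n:ℝ) - 2) / 2) * G (ξ i) (ξ j) else 0)}) :
    (∀ l, 1 ≤ l → l ≤ k → (S l).Nonempty ∧ BddAbove (S l)) ∧
    0 < sSup (S 1) ∧
    (∀ l, 1 ≤ l → l < k → sSup (S l) < sSup (S (l + 1))) :=
  stmt16_general n k hn c₂ c₃ hc₂ hc₃ A h hAmin hhcont hhinf G hGcont hGpos S hS
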